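/- arXiv:1608.08054 — 5 statements merged into one kernel-verified Lean document; each statement's English description precedes it below -/
import Mathlib

section
/- Let A be a Poincaré duality algebra of dimension n over a field 𝕜 which is moreover graded-commutative, i.e. a·b = (−1)^{(deg a)(deg b)} b·a for all homogeneous a, b ∈ A. Let τ : A ⊗ A → A ⊗ A be the Koszul twist, defined on homogeneous tensors by τ(x ⊗ y) = (−1)^{(deg x)(deg y)} y ⊗ x. Then τ(Δ_A) = (−1)^n Δ_A. -/
/-!
The dual basis is homogeneous, of degree `deg a'ᵢ = n - deg aᵢ`: the component of `a'ᵢ` in that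
degree pairs with the basis `a` exactly as `a'ᵢ` does, and an element is determined by its
pairings with `a` because `y ↦ (ε (aⱼ * y))ⱼ` is onto `𝕜^ι`, hence bijective by dimension count.
Expanding `a'ᵢ = ∑ⱼ ε (a'ᵢ * a'ⱼ) • aⱼ` writes both `τ Δ_A` and `(-1)^n • Δ_A` in the basis
`aⱼ ⊗ aᵢ`, and graded commutativity of `a'ᵢ * a'ⱼ` matches the coefficients: when
`deg aᵢ + deg aⱼ = n` the two sign exponents differ by an even number.
-/
open TensorProduct

namespace Module.Basis

variable {R : Type*} [CommRing R] {ι κ : Type*} [Fintype ι] [Fintype κ]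

theorem repr_eq_pairing_dual {A : Type*} [Ring A] [Algebra R A] [DecidableEq κ]
    (a : Basis κ R A) (ε : A →ₗ[R] R) (a' : κ → A)
    (hdual : ∀ i j, ε (a i * a' j) = if i = j then 1 else 0) (x : A) (j : κ) :
    a.repr x j = ε (x * a' j) := by
  conv_rhs => rw [← a.sum_repr x, Finset.sum_mul, map_sum]
  simp only [smul_mul_assoc, map_smul, hdual, smul_eq_mul, mul_ite, mul_one, mul_zero,
    Finset.sum_ite_eq', Finset.mem_univ, if_true]

variable {M N : Type*} [AddCommGroup M] [Module R M] [AddCommGroup N] [Module R N]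

theorem sum_smul_tmul_eq_sum_tmul_basis (b : Basis κ R N) (c : ι → R) (x : ι → M)
    (y : ι → N) :
    ∑ i, c i • (x i ⊗ₜ[R] y i) = ∑ i, ∑ j, (c i * b.repr (y i) j) • (x i ⊗ₜ[R] b j) := by
  refine Finset.sum_congr rfl fun i _ => ?_
  conv_lhs => rw [← b.sum_repr (y i)]
  simp only [tmul_sum, tmul_smul, Finset.smul_sum, smul_smul]

theorem sum_smul_tmul_eq_sum_basis_tmul (b : Basis κ R M) (c : ι → R) (x : ι → N)
    (y : ι → M) :
    ∑ i, c i • (y i ⊗ₜ[R] x i) = ∑ i, ∑ j, (c i * b.repr (y i) j) • (b j ⊗ₜ[R] x i) := by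
  refine Finset.sum_congr rfl fun i _ => ?_
  conv_lhs => rw [← b.sum_repr (y i)]
  simp only [sum_tmul, smul_tmul', Finset.smul_sum, smul_smul]

end Module.Basis

theorem eq_of_pairing_basis_eq {𝕜 A : Type*} [Field 𝕜] [Ring A] [Algebra 𝕜 A] (ε : A →ₗ[𝕜] 𝕜)
    {ι : Type*} [Fintype ι] [DecidableEq ι] (a : Module.Basis ι 𝕜 A) (a' : ι → A)
    (hdual : ∀ i j, ε (a i * a' j) = if i = j then 1 else 0) {y z : A}
    (h : ∀ j, ε (a j * y) = ε (a j * z)) : y = z := by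
  have := Module.Finite.of_basis a
  let φ : A →ₗ[𝕜] ι → 𝕜 := LinearMap.pi fun j => ε ∘ₗ LinearMap.mulLeft 𝕜 (a j)
  have hφ : Function.Surjective φ := fun f => ⟨∑ i, f i • a' i, funext fun j => by
    simp [φ, hdual]⟩
  have hrank : Module.finrank 𝕜 A = Module.finrank 𝕜 (ι → 𝕜) := by
    rw [Module.finrank_eq_card_basis a, Module.finrank_fintype_fun_eq_card]
  exact (LinearMap.injective_iff_surjective_of_finrank_eq_finrank hrank).2 hφ (funext h)

section PoincareDuality

variable {R A : Type*} [CommRing R] [Ring A] [Algebra R A] (𝒜 : ℕ → Submodule R A)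
  [GradedAlgebra 𝒜] {n : ℕ} (ε : A →ₗ[R] R) (hsupp : ∀ p, p ≠ n → ∀ x ∈ 𝒜 p, ε x = 0)
include hsupp

theorem pairing_eq_zero_of_add_ne {p q : ℕ} {x y : A} (hx : x ∈ 𝒜 p) (hy : y ∈ 𝒜 q)
    (hpq : p + q ≠ n) : ε (x * y) = 0 :=
  hsupp (p + q) hpq _ (SetLike.mul_mem_graded hx hy)

theorem pairing_eq_zero_of_lt {p : ℕ} {x : A} (hx : x ∈ 𝒜 p) (hp : n < p) (y : A) :
    ε (x * y) = 0 := by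
  induction y using DirectSum.Decomposition.inductionOn 𝒜 with
  | zero => simp
  | homogeneous y => exact pairing_eq_zero_of_add_ne 𝒜 ε hsupp hx y.2 (by omega)
  | add y z hy hz => simp [mul_add, hy, hz]

theorem pairing_eq_pairing_proj {p q : ℕ} {x : A} (hx : x ∈ 𝒜 p) (hpq : p + q = n) (y : A) :
    ε (x * y) = ε (x * GradedAlgebra.proj 𝒜 q y) := by
  induction y using DirectSum.Decomposition.inductionOn 𝒜 with
  | zero => simp
  | @homogeneous r y =>
    by_cases hr : r = q
    · subst hr
      rw [GradedAlgebra.proj_apply, DirectSum.decompose_coe, DirectSum.of_eq_same]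
    · rw [GradedAlgebra.proj_apply, DirectSum.decompose_of_mem_ne 𝒜 y.2 hr, mul_zero, map_zero,
        pairing_eq_zero_of_add_ne 𝒜 ε hsupp hx y.2 (by omega)]
  | add y z hy hz => simp only [mul_add, map_add, hy, hz]

theorem sign_mul_pairing_eq
    (hcomm : ∀ p q, ∀ x ∈ 𝒜 p, ∀ y ∈ 𝒜 q, x * y = ((-1 : R) ^ (p * q)) • (y * x))
    {d e : ℕ} {x y : A} (hx : x ∈ 𝒜 (n - d)) (hy : y ∈ 𝒜 (n - e)) (hd : d ≤ n) (he : e ≤ n) :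
    (-1 : R) ^ (d + d * (n - d)) * ε (x * y) = (-1) ^ (n + e) * ε (y * x) := by
  by_cases hde : d + e = n
  · obtain rfl := hde
    rw [show d + e - d = e by omega] at hx ⊢
    rw [show d + e - e = d by omega] at hy
    rw [hcomm _ _ _ hx _ hy, map_smul, smul_eq_mul, ← mul_assoc, ← pow_add]
    congr 1
    rw [show d + d * e + e * d = d + 2 * (d * e) by ring, show d + e + e = d + 2 * e by ring]
    simp [pow_add, pow_mul]
  · rw [pairing_eq_zero_of_add_ne 𝒜 ε hsupp hx hy (by omega),
      pairing_eq_zero_of_add_ne 𝒜 ε hsupp hy hx (by omega), mul_zero, mul_zero]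

end PoincareDuality

theorem dual_basis_mem_graded {𝕜 A : Type*} [Field 𝕜] [Ring A] [Algebra 𝕜 A]
    (𝒜 : ℕ → Submodule 𝕜 A) [GradedAlgebra 𝒜] {n : ℕ} (ε : A →ₗ[𝕜] 𝕜)
    (hsupp : ∀ p, p ≠ n → ∀ x ∈ 𝒜 p, ε x = 0)
    {ι : Type*} [Fintype ι] [DecidableEq ι] (a : Module.Basis ι 𝕜 A) {da : ι → ℕ}
    (ha : ∀ i, a i ∈ 𝒜 (da i)) (a' : ι → A)
    (hdual : ∀ i j, ε (a i * a' j) = if i = j then 1 else 0) (i : ι) :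
    da i ≤ n ∧ a' i ∈ 𝒜 (n - da i) := by
  have hle : da i ≤ n := by
    by_contra! hlt
    have h := hdual i i
    rw [pairing_eq_zero_of_lt 𝒜 ε hsupp (ha i) hlt, if_pos rfl] at h
    exact zero_ne_one h
  have hproj : GradedAlgebra.proj 𝒜 (n - da i) (a' i) ∈ 𝒜 (n - da i) := SetLike.coe_mem _
  refine ⟨hle, ?_⟩
  convert hproj using 1
  refine eq_of_pairing_basis_eq ε a a' hdual fun j => ?_
  by_cases hj : da j = da i
  · exact pairing_eq_pairing_proj 𝒜 ε hsupp (ha j) (by omega) _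
  · rw [hdual, if_neg (by rintro rfl; exact hj rfl),
      pairing_eq_zero_of_add_ne 𝒜 ε hsupp (ha j) hproj (by omega)]

theorem koszul_twist_diagonal_general
    {𝕜 : Type*} [Field 𝕜] {A : Type*} [Ring A] [Algebra 𝕜 A]
    (𝒜 : ℕ → Submodule 𝕜 A) [GradedAlgebra 𝒜] (n : ℕ)
    -- graded commutativity
    (hcomm : ∀ p q, ∀ x ∈ 𝒜 p, ∀ y ∈ 𝒜 q, x * y = ((-1 : 𝕜) ^ (p * q)) • (y * x))
    (ε : A →ₗ[𝕜] 𝕜)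
    -- ε is supported in degree n
    (hsupp : ∀ p, p ≠ n → ∀ x ∈ 𝒜 p, ε x = 0)
    -- a homogeneous basis `a` with degrees `da` and dual basis `a'`
    {ι : Type*} [Fintype ι] [DecidableEq ι] (a : Module.Basis ι 𝕜 A) (da : ι → ℕ)
    (ha : ∀ i, a i ∈ 𝒜 (da i))
    (a' : ι → A) (hdual_a : ∀ i j, ε (a i * a' j) = if i = j then 1 else 0)
    -- the Koszul twist
    (τ : A ⊗[𝕜] A →ₗ[𝕜] A ⊗[𝕜] A)
    (hτ : ∀ p q, ∀ x ∈ 𝒜 p, ∀ y ∈ 𝒜 q,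
      τ (x ⊗ₜ[𝕜] y) = ((-1 : 𝕜) ^ (p * q)) • (y ⊗ₜ[𝕜] x)) :
    τ (∑ i, ((-1 : 𝕜) ^ da i) • (a i ⊗ₜ[𝕜] a' i))
      = ((-1 : 𝕜) ^ n) • ∑ i, ((-1 : 𝕜) ^ da i) • (a i ⊗ₜ[𝕜] a' i) := by
  have hdeg := dual_basis_mem_graded 𝒜 ε hsupp a ha a' hdual_a
  have hrepr := a.repr_eq_pairing_dual ε a' hdual_a
  calc τ (∑ i, ((-1 : 𝕜) ^ da i) • (a i ⊗ₜ[𝕜] a' i))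
      = ∑ i, (-1 : 𝕜) ^ (da i + da i * (n - da i)) • (a' i ⊗ₜ[𝕜] a i) := by
        simp only [map_sum, map_smul, hτ _ _ _ (ha _) _ (hdeg _).2, smul_smul, pow_add]
    _ = ∑ j, ∑ i, ((-1 : 𝕜) ^ (n + da j) * ε (a' j * a' i)) • (a j ⊗ₜ[𝕜] a i) := by
        rw [a.sum_smul_tmul_eq_sum_basis_tmul, Finset.sum_comm]
        refine Finset.sum_congr rfl fun j _ => Finset.sum_congr rfl fun i _ => ?_
        rw [hrepr, sign_mul_pairing_eq 𝒜 ε hsupp hcomm (hdeg i).2 (hdeg j).2 (hdeg i).1 (hdeg j).1]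
    _ = ((-1 : 𝕜) ^ n) • ∑ i, ((-1 : 𝕜) ^ da i) • (a i ⊗ₜ[𝕜] a' i) := by
        simp only [Finset.smul_sum, smul_smul, ← pow_add]
        rw [a.sum_smul_tmul_eq_sum_tmul_basis]
        simp only [hrepr]

/-- Let `A` be a graded-commutative Poincaré duality algebra of dimension `n` over a
field `𝕜`, and let `τ : A ⊗ A → A ⊗ A` be the Koszul twist, determined on homogeneous
tensors by `τ (x ⊗ y) = (-1)^{deg x · deg y} (y ⊗ x)`.  Then `τ (Δ_A) = (-1)^n Δ_A`. -/
theorem koszul_twist_diagonal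
    {𝕜 : Type*} [Field 𝕜] {A : Type*} [Ring A] [Algebra 𝕜 A]
    [FiniteDimensional 𝕜 A]
    (𝒜 : ℕ → Submodule 𝕜 A) [GradedAlgebra 𝒜] (n : ℕ)
    -- graded commutativity
    (hcomm : ∀ p q, ∀ x ∈ 𝒜 p, ∀ y ∈ 𝒜 q, x * y = ((-1 : 𝕜) ^ (p * q)) • (y * x))
    (ε : A →ₗ[𝕜] 𝕜)
    -- ε is supported in degree n
    (hsupp : ∀ p, p ≠ n → ∀ x ∈ 𝒜 p, ε x = 0)
    -- the pairing `A^p × A^{n-p} → 𝕜` is nondegenerate on the left and on the right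
    (hndl : ∀ p, ∀ x ∈ 𝒜 p, x ≠ 0 → ∃ q, p + q = n ∧ ∃ y ∈ 𝒜 q, ε (x * y) ≠ 0)
    (hndr : ∀ q, ∀ y ∈ 𝒜 q, y ≠ 0 → ∃ p, p + q = n ∧ ∃ x ∈ 𝒜 p, ε (x * y) ≠ 0)
    -- a homogeneous basis `a` with degrees `da` and dual basis `a'`
    {ι : Type*} [Fintype ι] [DecidableEq ι] (a : Module.Basis ι 𝕜 A) (da : ι → ℕ)
    (ha : ∀ i, a i ∈ 𝒜 (da i))
    (a' : ι → A) (hdual_a : ∀ i j, ε (a i * a' j) = if i = j then 1 else 0)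
    -- the Koszul twist
    (τ : A ⊗[𝕜] A →ₗ[𝕜] A ⊗[𝕜] A)
    (hτ : ∀ p q, ∀ x ∈ 𝒜 p, ∀ y ∈ 𝒜 q,
      τ (x ⊗ₜ[𝕜] y) = ((-1 : 𝕜) ^ (p * q)) • (y ⊗ₜ[𝕜] x)) :
    τ (∑ i, ((-1 : 𝕜) ^ da i) • (a i ⊗ₜ[𝕜] a' i))
      = ((-1 : 𝕜) ^ n) • ∑ i, ((-1 : 𝕜) ^ da i) • (a i ⊗ₜ[𝕜] a' i) :=
  koszul_twist_diagonal_general 𝒜 n hcomm ε hsupp a da ha a' hdual_a τ hτ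
end

section
/- Let A be a Poincaré duality algebra of dimension n over a field 𝕜 which is graded-commutative (a·b = (−1)^{(deg a)(deg b)} b·a for homogeneous a, b), with homogeneous basis {a_i} and dual basis {a_i^∨}. Then for every homogeneous a ∈ A of degree p, the identity (a ⊗ 1)·Δ_A = (1 ⊗ a)·Δ_A holds in the graded tensor product; explicitly, Σ_i (−1)^{deg a_i} (a·a_i) ⊗ a_i^∨ = Σ_i (−1)^{(deg a_i)(1+p)} a_i ⊗ (a·a_i^∨) in A ⊗_𝕜 A. -/
open TensorProduct

/-!
Expand the first tensor factor in the basis `a`, whose coordinates are `z ↦ ε (z * a' k)`, and the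
second one in the family `a'`, which is a basis since it is dual to one, with coordinates
`z ↦ ε (a i * z)`. Both sides become combinations of the `a k ⊗ a' i`, with coefficients
`± ε (x * a i * a' k)` and `± ε (a i * x * a' k)`. Graded commutativity turns `x * a i` into
`± a i * x`, and `ε (a i * x * a' k)`, the `a k`-coordinate of the homogeneous element `a i * x`,
vanishes unless `deg a k = deg a i + p`; in that case the two signs agree because `p (p + 1)` is even.
-/

theorem neg_one_pow_add_mul_one_add {R : Type*} [Monoid R] [HasDistribNeg R] (d p : ℕ) :
    (-1 : R) ^ ((d + p) * (1 + p)) = (-1) ^ (d + p * d) := by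
  obtain ⟨c, hc⟩ := Nat.even_mul_succ_self p
  rw [show (d + p) * (1 + p) = d + p * d + p * (p + 1) by ring, pow_add,
    Even.neg_one_pow ⟨c, hc⟩, mul_one]

namespace Module.Basis

section Pairing

variable {R A ι : Type*} [CommRing R] [Ring A] [Algebra R A] [DecidableEq ι]
  {ε : A →ₗ[R] R} {a : Basis ι R A} {a' : ι → A}

theorem repr_eq_pairing_right (hdual : ∀ i j, ε (a i * a' j) = if i = j then 1 else 0)
    (z : A) (k : ι) : a.repr z k = ε (z * a' k) := by
  have : a.coord k = ε ∘ₗ LinearMap.mulRight R (a' k) :=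
    a.ext fun j => by simp [hdual, Finsupp.single_apply]
  exact LinearMap.congr_fun this z

variable [Fintype ι]

theorem tmul_eq_sum_pairing_right (hdual : ∀ i j, ε (a i * a' j) = if i = j then 1 else 0)
    (z w : A) : z ⊗ₜ[R] w = ∑ k, ε (z * a' k) • (a k ⊗ₜ[R] w) := by
  conv_lhs => rw [← a.sum_repr z]
  simp [repr_eq_pairing_right hdual, sum_tmul, smul_tmul']

theorem linearIndependent_of_pairing (hdual : ∀ i j, ε (a i * a' j) = if i = j then 1 else 0) :
    LinearIndependent R a' := by
  refine Fintype.linearIndependent_iff.mpr fun g hg j => ?_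
  simpa [Finset.mul_sum, hdual] using congrArg (fun z => ε (a j * z)) hg

end Pairing

variable {K A ι : Type*} [Field K] [Ring A] [Algebra K A] [Fintype ι] [DecidableEq ι]
  {ε : A →ₗ[K] K} {a : Basis ι K A} {a' : ι → A}

theorem sum_pairing_left_smul (hdual : ∀ i j, ε (a i * a' j) = if i = j then 1 else 0)
    (z : A) : ∑ k, ε (a k * z) • a' k = z := by
  have := Module.Finite.of_basis a
  set b := basisOfLinearIndependentOfCardEqFinrank' a' (linearIndependent_of_pairing hdual)
    (finrank_eq_card_basis a).symm
  have hb : ⇑b = a' := coe_basisOfLinearIndependentOfCardEqFinrank' ..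
  have hcoord : ∀ k, b.coord k = ε ∘ₗ LinearMap.mulLeft K (a k) := fun k =>
    b.ext fun j => by rw [coord_apply, repr_self]; simp [hb, hdual, Finsupp.single_apply, eq_comm]
  simpa [← coord_apply, hcoord, hb] using b.sum_repr z

theorem tmul_eq_sum_pairing_left (hdual : ∀ i j, ε (a i * a' j) = if i = j then 1 else 0)
    (w z : A) : w ⊗ₜ[K] z = ∑ i, ε (a i * z) • (w ⊗ₜ[K] a' i) := by
  conv_lhs => rw [← sum_pairing_left_smul hdual z]
  simp [tmul_sum, tmul_smul]

end Module.Basis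

section Graded

variable {R A ι γ : Type*} [CommRing R] [Ring A] [Algebra R A] {a : Module.Basis ι R A}

open DirectSum in
theorem Module.Basis.repr_eq_zero_of_mem_of_degree_ne [DecidableEq γ] [AddMonoid γ]
    (𝒜 : γ → Submodule R A) [GradedAlgebra 𝒜] {da : ι → γ} (ha : ∀ i, a i ∈ 𝒜 (da i))
    {d : γ} {z : A} (hz : z ∈ 𝒜 d) {k : ι} (hk : da k ≠ d) : a.repr z k = 0 := by
  have : a.coord k ∘ₗ GradedAlgebra.proj 𝒜 d = 0 := a.ext fun j => by
    by_cases hj : da j = d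
    · have hjk : j ≠ k := by rintro rfl; exact hk hj
      simp [GradedAlgebra.proj_apply, decompose_of_mem_same 𝒜 (hj ▸ ha j), hjk]
    · simp [GradedAlgebra.proj_apply, decompose_of_mem_ne 𝒜 (ha j) hj]
  simpa [GradedAlgebra.proj_apply, decompose_of_mem_same 𝒜 hz] using LinearMap.congr_fun this z

theorem neg_one_pow_mul_pairing_comm [DecidableEq ι] (𝒜 : ℕ → Submodule R A) [GradedAlgebra 𝒜]
    (hcomm : ∀ p q, ∀ x ∈ 𝒜 p, ∀ y ∈ 𝒜 q, x * y = ((-1 : R) ^ (p * q)) • (y * x))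
    {ε : A →ₗ[R] R} {da : ι → ℕ} (ha : ∀ i, a i ∈ 𝒜 (da i))
    {a' : ι → A} (hdual : ∀ i j, ε (a i * a' j) = if i = j then 1 else 0)
    {x : A} {p : ℕ} (hx : x ∈ 𝒜 p) (i k : ι) :
    (-1 : R) ^ da i * ε (x * a i * a' k) = (-1) ^ (da k * (1 + p)) * ε (a i * x * a' k) := by
  rw [hcomm p (da i) x hx (a i) (ha i), smul_mul_assoc, map_smul, smul_eq_mul, ← mul_assoc,
    ← pow_add]
  rcases eq_or_ne (da k) (da i + p) with hk | hk
  · rw [hk, neg_one_pow_add_mul_one_add]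
  · rw [← a.repr_eq_pairing_right hdual,
      a.repr_eq_zero_of_mem_of_degree_ne 𝒜 ha (SetLike.mul_mem_graded (ha i) hx) hk,
      mul_zero, mul_zero]

end Graded

theorem diagonal_element_swap_general
    {𝕜 : Type*} [Field 𝕜] {A : Type*} [Ring A] [Algebra 𝕜 A]
    (𝒜 : ℕ → Submodule 𝕜 A) [GradedAlgebra 𝒜]
    -- graded commutativity
    (hcomm : ∀ p q, ∀ x ∈ 𝒜 p, ∀ y ∈ 𝒜 q, x * y = ((-1 : 𝕜) ^ (p * q)) • (y * x))
    (ε : A →ₗ[𝕜] 𝕜)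
    -- a homogeneous basis `a` with degrees `da` and dual basis `a'`
    {ι : Type*} [Fintype ι] [DecidableEq ι] (a : Module.Basis ι 𝕜 A) (da : ι → ℕ)
    (ha : ∀ i, a i ∈ 𝒜 (da i))
    (a' : ι → A) (hdual_a : ∀ i j, ε (a i * a' j) = if i = j then 1 else 0)
    -- a homogeneous element `x` of degree `p`
    (x : A) (p : ℕ) (hx : x ∈ 𝒜 p) :
    ∑ i, ((-1 : 𝕜) ^ da i) • ((x * a i) ⊗ₜ[𝕜] a' i)
      = ∑ i, ((-1 : 𝕜) ^ (da i * (1 + p))) • (a i ⊗ₜ[𝕜] (x * a' i)) := by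
  calc ∑ i, ((-1 : 𝕜) ^ da i) • ((x * a i) ⊗ₜ[𝕜] a' i)
      = ∑ i, ∑ k, ((-1 : 𝕜) ^ da i * ε (x * a i * a' k)) • (a k ⊗ₜ[𝕜] a' i) := by
        simp only [a.tmul_eq_sum_pairing_right hdual_a (x * a _), Finset.smul_sum, smul_smul]
    _ = ∑ k, ∑ i, ((-1 : 𝕜) ^ (da k * (1 + p)) * ε (a i * x * a' k)) • (a k ⊗ₜ[𝕜] a' i) := by
        rw [Finset.sum_comm]
        simp only [neg_one_pow_mul_pairing_comm 𝒜 hcomm ha hdual_a hx]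
    _ = ∑ k, ((-1 : 𝕜) ^ (da k * (1 + p))) • (a k ⊗ₜ[𝕜] (x * a' k)) := by
        simp only [a.tmul_eq_sum_pairing_left hdual_a (a _) (x * a' _), Finset.smul_sum, smul_smul,
          mul_assoc]

/-- Let `A` be a graded-commutative Poincaré duality algebra of dimension `n` over a
field `𝕜`, with homogeneous basis `{a_i}` and dual basis `{a_i^∨}`.  Then for every
homogeneous `a ∈ A` of degree `p` one has `(a ⊗ 1) · Δ_A = (1 ⊗ a) · Δ_A`, explicitly
`Σ_i (-1)^{deg a_i} (a·a_i) ⊗ a_i^∨ = Σ_i (-1)^{deg a_i (1 + p)} a_i ⊗ (a·a_i^∨)`. -/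
theorem diagonal_element_swap
    {𝕜 : Type*} [Field 𝕜] {A : Type*} [Ring A] [Algebra 𝕜 A]
    [FiniteDimensional 𝕜 A]
    (𝒜 : ℕ → Submodule 𝕜 A) [GradedAlgebra 𝒜] (n : ℕ)
    -- graded commutativity
    (hcomm : ∀ p q, ∀ x ∈ 𝒜 p, ∀ y ∈ 𝒜 q, x * y = ((-1 : 𝕜) ^ (p * q)) • (y * x))
    (ε : A →ₗ[𝕜] 𝕜)
    -- ε is supported in degree n
    (hsupp : ∀ p, p ≠ n → ∀ x ∈ 𝒜 p, ε x = 0)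
    -- the pairing `A^p × A^{n-p} → 𝕜` is nondegenerate on the left and on the right
    (hndl : ∀ p, ∀ x ∈ 𝒜 p, x ≠ 0 → ∃ q, p + q = n ∧ ∃ y ∈ 𝒜 q, ε (x * y) ≠ 0)
    (hndr : ∀ q, ∀ y ∈ 𝒜 q, y ≠ 0 → ∃ p, p + q = n ∧ ∃ x ∈ 𝒜 p, ε (x * y) ≠ 0)
    -- a homogeneous basis `a` with degrees `da` and dual basis `a'`
    {ι : Type*} [Fintype ι] [DecidableEq ι] (a : Module.Basis ι 𝕜 A) (da : ι → ℕ)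
    (ha : ∀ i, a i ∈ 𝒜 (da i))
    (a' : ι → A) (hdual_a : ∀ i j, ε (a i * a' j) = if i = j then 1 else 0)
    -- a homogeneous element `x` of degree `p`
    (x : A) (p : ℕ) (hx : x ∈ 𝒜 p) :
    ∑ i, ((-1 : 𝕜) ^ da i) • ((x * a i) ⊗ₜ[𝕜] a' i)
      = ∑ i, ((-1 : 𝕜) ^ (da i * (1 + p))) • (a i ⊗ₜ[𝕜] (x * a' i)) :=
  diagonal_element_swap_general 𝒜 hcomm ε a da ha a' hdual_a x p hx
end

section
/- Let A be a Poincaré duality algebra of dimension n over a field 𝕜 which is connected, i.e. A^0 = 𝕜·1_A, with homogeneous basis {a_i} and dual basis {a_i^∨}. Let vol_A ∈ A^n be an element with ε(vol_A) = 1, and let χ(A) = Σ_p (−1)^p dim_𝕜 A^p be the Euler characteristic of A. Then the image of the diagonal element under the multiplication map μ_A : A ⊗ A → A satisfies μ_A(Δ_A) = Σ_i (−1)^{deg a_i} a_i · a_i^∨ = χ(A) · vol_A. -/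
/-!
Nondegeneracy of the pairing forces the dual basis to be homogeneous, `a_i^∨ ∈ A^{n - deg a_i}`,
so every product `a_i a_i^∨` lies in `A^n`. Connectedness and nondegeneracy make `A^n` the line
spanned by `vol`, and `ε (a_i a_i^∨) = 1` then gives `a_i a_i^∨ = vol`. The sum is therefore
`(∑_i (-1)^{deg a_i}) • vol`, and counting the homogeneous basis vectors degree by degree
identifies the coefficient with `χ(A)`.
-/

open DirectSum Module Submodule
open scoped Finset

section GradedModule

variable {ι R M κ : Type*} [DecidableEq ι]

theorem LinearMap.apply_eq_apply_decompose [Semiring R] [AddCommMonoid M] [Module R M]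
    {N : Type*} [AddCommMonoid N] [Module R N]
    (ℳ : ι → Submodule R M) [Decomposition ℳ] {f : M →ₗ[R] N} {i₀ : ι}
    (hf : ∀ i, i ≠ i₀ → ∀ x ∈ ℳ i, f x = 0) (x : M) :
    f x = f (decompose ℳ x i₀) := by
  classical
  conv_lhs => rw [← sum_support_decompose ℳ x]
  rw [map_sum]
  refine Finset.sum_eq_single i₀ (fun i _ hi => hf i hi _ (SetLike.coe_mem _)) fun hi => ?_
  rw [DFinsupp.notMem_support_iff.mp hi, ZeroMemClass.coe_zero, map_zero]

theorem Module.Basis.span_image_degree_eq [Semiring R] [AddCommMonoid M] [Module R M]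
    [Fintype κ] (ℳ : ι → Submodule R M) [Decomposition ℳ] (b : Basis κ R M) {deg : κ → ι}
    (hb : ∀ k, b k ∈ ℳ (deg k)) (i : ι) :
    span R (b '' {k | deg k = i}) = ℳ i := by
  refine le_antisymm (span_le.mpr ?_) fun x hx => ?_
  · rintro _ ⟨k, rfl, rfl⟩
    exact hb k
  rw [← decompose_of_mem_same ℳ hx, ← b.sum_repr x, decompose_sum, DFinsupp.finsetSum_apply,
    AddSubmonoidClass.coe_finsetSum]
  refine sum_mem fun k _ => ?_
  rw [decompose_smul, DirectSum.smul_apply, SetLike.val_smul]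
  refine smul_mem _ _ ?_
  by_cases h : deg k = i
  · rw [decompose_of_mem_same ℳ (h ▸ hb k)]
    exact subset_span ⟨k, h, rfl⟩
  · rw [decompose_of_mem_ne ℳ (hb k) h]
    exact zero_mem _

theorem Module.Basis.finrank_eq_card_degree [DivisionRing R] [AddCommGroup M] [Module R M]
    [Fintype κ] (ℳ : ι → Submodule R M) [Decomposition ℳ] (b : Basis κ R M) {deg : κ → ι}
    (hb : ∀ k, b k ∈ ℳ (deg k)) (i : ι) :
    finrank R (ℳ i) = #{k | deg k = i} := by
  rw [← b.span_image_degree_eq ℳ hb i, Set.image_eq_range, ← Fintype.card_subtype]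
  exact finrank_span_eq_card (b.linearIndependent.comp Subtype.val Subtype.val_injective)

theorem Module.Basis.finsum_mul_finrank_eq_sum [DivisionRing R] [AddCommGroup M] [Module R M]
    [Fintype κ] (ℳ : ι → Submodule R M) [Decomposition ℳ] (b : Basis κ R M) {deg : κ → ι}
    (hb : ∀ k, b k ∈ ℳ (deg k)) (f : ι → ℤ) :
    ∑ᶠ i, f i * (finrank R (ℳ i) : ℤ) = ∑ k, f (deg k) := by
  rw [Finset.sum_comp, finsum_eq_sum_of_support_subset _ (s := Finset.univ.image deg) ?_]
  · refine Finset.sum_congr rfl fun i _ => ?_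
    rw [b.finrank_eq_card_degree ℳ hb, nsmul_eq_mul, mul_comm]
  · intro i hi
    contrapose! hi
    simp_all [b.finrank_eq_card_degree ℳ hb]

end GradedModule

namespace PoincareDuality

variable {𝕜 A : Type*} [Field 𝕜] [Ring A] [Algebra 𝕜 A] {𝒜 : ℕ → Submodule 𝕜 A} {n : ℕ}
  {ε : A →ₗ[𝕜] 𝕜}

theorem le_of_mem_of_ne_zero
    (hndl : ∀ p, ∀ x ∈ 𝒜 p, x ≠ 0 → ∃ q, p + q = n ∧ ∃ y ∈ 𝒜 q, ε (x * y) ≠ 0)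
    {p : ℕ} {x : A} (hx : x ∈ 𝒜 p) (hx0 : x ≠ 0) : p ≤ n := by
  obtain ⟨q, hpq, -⟩ := hndl p x hx hx0
  omega

theorem eq_smul_vol_of_mem_top (hconn : 𝒜 0 = span 𝕜 {(1 : A)})
    (hndl : ∀ p, ∀ x ∈ 𝒜 p, x ≠ 0 → ∃ q, p + q = n ∧ ∃ y ∈ 𝒜 q, ε (x * y) ≠ 0)
    {vol : A} (hvol : vol ∈ 𝒜 n) (hεvol : ε vol = 1) {x : A} (hx : x ∈ 𝒜 n) :
    x = ε x • vol := by
  by_contra hne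
  obtain ⟨q, hq, y, hy, hxy⟩ := hndl n _ (sub_mem hx (smul_mem _ _ hvol)) (sub_ne_zero.mpr hne)
  obtain rfl : q = 0 := by omega
  rw [hconn, mem_span_singleton] at hy
  obtain ⟨c, rfl⟩ := hy
  simp [hεvol] at hxy

variable [GradedAlgebra 𝒜]

theorem apply_mul_eq_apply_mul_decompose (hsupp : ∀ p, p ≠ n → ∀ x ∈ 𝒜 p, ε x = 0)
    {p : ℕ} {x : A} (hx : x ∈ 𝒜 p) (hp : p ≤ n) (z : A) :
    ε (x * z) = ε (x * decompose 𝒜 z (n - p)) := by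
  rw [ε.apply_eq_apply_decompose 𝒜 hsupp, coe_decompose_mul_of_left_mem_of_le 𝒜 hx hp]

theorem eq_of_forall_apply_mul_eq (hsupp : ∀ p, p ≠ n → ∀ x ∈ 𝒜 p, ε x = 0)
    (hndr : ∀ q, ∀ y ∈ 𝒜 q, y ≠ 0 → ∃ p, p + q = n ∧ ∃ x ∈ 𝒜 p, ε (x * y) ≠ 0)
    {y z : A} (h : ∀ x, ε (x * y) = ε (x * z)) : y = z := by
  classical
  rw [← sub_eq_zero, ← sum_support_decompose 𝒜 (y - z)]
  refine Finset.sum_eq_zero fun q _ => ?_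
  by_contra hq
  obtain ⟨p, hpq, x, hx, hne⟩ := hndr q _ (SetLike.coe_mem _) hq
  obtain rfl : q = n - p := by omega
  rw [← apply_mul_eq_apply_mul_decompose hsupp hx (by omega), mul_sub, map_sub, h, sub_self]
    at hne
  exact hne rfl

variable {ι : Type*} [DecidableEq ι] {a : Basis ι 𝕜 A} {da : ι → ℕ} {a' : ι → A}

theorem dual_mem (hsupp : ∀ p, p ≠ n → ∀ x ∈ 𝒜 p, ε x = 0)
    (hndl : ∀ p, ∀ x ∈ 𝒜 p, x ≠ 0 → ∃ q, p + q = n ∧ ∃ y ∈ 𝒜 q, ε (x * y) ≠ 0)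
    (hndr : ∀ q, ∀ y ∈ 𝒜 q, y ≠ 0 → ∃ p, p + q = n ∧ ∃ x ∈ 𝒜 p, ε (x * y) ≠ 0)
    (ha : ∀ i, a i ∈ 𝒜 (da i)) (hdual : ∀ i j, ε (a i * a' j) = if i = j then 1 else 0)
    (i : ι) : a' i ∈ 𝒜 (n - da i) := by
  have hdeg j : da j ≤ n := le_of_mem_of_ne_zero hndl (ha j) (a.ne_zero j)
  suffices a' i = decompose 𝒜 (a' i) (n - da i) from this ▸ SetLike.coe_mem _
  refine eq_of_forall_apply_mul_eq hsupp hndr fun x => LinearMap.congr_fun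
    (a.ext (f₁ := ε ∘ₗ .mulRight 𝕜 _) (f₂ := ε ∘ₗ .mulRight 𝕜 _) fun j => ?_) x
  simp only [LinearMap.comp_apply, LinearMap.mulRight_apply]
  by_cases hij : da j = da i
  · rw [apply_mul_eq_apply_mul_decompose hsupp (ha j) (hdeg j), hij]
  · rw [hdual, if_neg (by rintro rfl; exact hij rfl),
      hsupp _ (by have := hdeg i; omega) _ (SetLike.mul_mem_graded (ha j) (SetLike.coe_mem _))]

theorem mul_dual_eq_vol (hconn : 𝒜 0 = span 𝕜 {(1 : A)})
    (hsupp : ∀ p, p ≠ n → ∀ x ∈ 𝒜 p, ε x = 0)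
    (hndl : ∀ p, ∀ x ∈ 𝒜 p, x ≠ 0 → ∃ q, p + q = n ∧ ∃ y ∈ 𝒜 q, ε (x * y) ≠ 0)
    (hndr : ∀ q, ∀ y ∈ 𝒜 q, y ≠ 0 → ∃ p, p + q = n ∧ ∃ x ∈ 𝒜 p, ε (x * y) ≠ 0)
    (ha : ∀ i, a i ∈ 𝒜 (da i)) (hdual : ∀ i j, ε (a i * a' j) = if i = j then 1 else 0)
    {vol : A} (hvol : vol ∈ 𝒜 n) (hεvol : ε vol = 1) (i : ι) : a i * a' i = vol := by
  have hmem : a i * a' i ∈ 𝒜 n := by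
    have := SetLike.mul_mem_graded (ha i) (dual_mem hsupp hndl hndr ha hdual i)
    rwa [Nat.add_sub_cancel' (le_of_mem_of_ne_zero hndl (ha i) (a.ne_zero i))] at this
  rw [eq_smul_vol_of_mem_top hconn hndl hvol hεvol hmem, hdual, if_pos rfl, one_smul]

end PoincareDuality

open PoincareDuality in
theorem mul_diagonal_element_eq_euler_smul_vol_general
    {𝕜 : Type*} [Field 𝕜] {A : Type*} [Ring A] [Algebra 𝕜 A]
    (𝒜 : ℕ → Submodule 𝕜 A) [GradedAlgebra 𝒜] (n : ℕ)
    -- connectedness: `A^0 = 𝕜 · 1`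
    (hconn : 𝒜 0 = Submodule.span 𝕜 {(1 : A)})
    (ε : A →ₗ[𝕜] 𝕜)
    -- ε is supported in degree n
    (hsupp : ∀ p, p ≠ n → ∀ x ∈ 𝒜 p, ε x = 0)
    -- the pairing `A^p × A^{n-p} → 𝕜` is nondegenerate on the left and on the right
    (hndl : ∀ p, ∀ x ∈ 𝒜 p, x ≠ 0 → ∃ q, p + q = n ∧ ∃ y ∈ 𝒜 q, ε (x * y) ≠ 0)
    (hndr : ∀ q, ∀ y ∈ 𝒜 q, y ≠ 0 → ∃ p, p + q = n ∧ ∃ x ∈ 𝒜 p, ε (x * y) ≠ 0)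
    -- a homogeneous basis `a` with degrees `da` and dual basis `a'`
    {ι : Type*} [Fintype ι] [DecidableEq ι] (a : Module.Basis ι 𝕜 A) (da : ι → ℕ)
    (ha : ∀ i, a i ∈ 𝒜 (da i))
    (a' : ι → A) (hdual_a : ∀ i j, ε (a i * a' j) = if i = j then 1 else 0)
    -- the volume element
    (vol : A) (hvol : vol ∈ 𝒜 n) (hεvol : ε vol = 1) :
    ∑ i, ((-1 : 𝕜) ^ da i) • (a i * a' i)
      = (∑ᶠ p : ℕ, ((-1 : ℤ) ^ p * (Module.finrank 𝕜 (𝒜 p) : ℤ))) • vol := by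
  rw [a.finsum_mul_finrank_eq_sum 𝒜 ha, Finset.sum_smul]
  refine Finset.sum_congr rfl fun i _ => ?_
  rw [mul_dual_eq_vol hconn hsupp hndl hndr ha hdual_a hvol hεvol i, ← Int.cast_smul_eq_zsmul 𝕜,
    Int.cast_pow, Int.cast_neg, Int.cast_one]

/-- Let `A` be a connected Poincaré duality algebra of dimension `n` over a field `𝕜`,
with homogeneous basis `{a_i}`, dual basis `{a_i^∨}`, volume element `vol ∈ A^n`
with `ε vol = 1`, and Euler characteristic `χ(A) = Σ_p (-1)^p dim A^p`.
Then `μ_A (Δ_A) = Σ_i (-1)^{deg a_i} a_i · a_i^∨ = χ(A) · vol`. -/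
theorem mul_diagonal_element_eq_euler_smul_vol
    {𝕜 : Type*} [Field 𝕜] {A : Type*} [Ring A] [Algebra 𝕜 A]
    [FiniteDimensional 𝕜 A]
    (𝒜 : ℕ → Submodule 𝕜 A) [GradedAlgebra 𝒜] (n : ℕ)
    -- connectedness: `A^0 = 𝕜 · 1`
    (hconn : 𝒜 0 = Submodule.span 𝕜 {(1 : A)})
    (ε : A →ₗ[𝕜] 𝕜)
    -- ε is supported in degree n
    (hsupp : ∀ p, p ≠ n → ∀ x ∈ 𝒜 p, ε x = 0)
    -- the pairing `A^p × A^{n-p} → 𝕜` is nondegenerate on the left and on the right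
    (hndl : ∀ p, ∀ x ∈ 𝒜 p, x ≠ 0 → ∃ q, p + q = n ∧ ∃ y ∈ 𝒜 q, ε (x * y) ≠ 0)
    (hndr : ∀ q, ∀ y ∈ 𝒜 q, y ≠ 0 → ∃ p, p + q = n ∧ ∃ x ∈ 𝒜 p, ε (x * y) ≠ 0)
    -- a homogeneous basis `a` with degrees `da` and dual basis `a'`
    {ι : Type*} [Fintype ι] [DecidableEq ι] (a : Module.Basis ι 𝕜 A) (da : ι → ℕ)
    (ha : ∀ i, a i ∈ 𝒜 (da i))
    (a' : ι → A) (hdual_a : ∀ i j, ε (a i * a' j) = if i = j then 1 else 0)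
    -- the volume element
    (vol : A) (hvol : vol ∈ 𝒜 n) (hεvol : ε vol = 1) :
    ∑ i, ((-1 : 𝕜) ^ da i) • (a i * a' i)
      = (∑ᶠ p : ℕ, ((-1 : ℤ) ^ p * (Module.finrank 𝕜 (𝒜 p) : ℤ))) • vol :=
  mul_diagonal_element_eq_euler_smul_vol_general 𝒜 n hconn ε hsupp hndl hndr a da ha a' hdual_a vol
    hvol hεvol
end

section
/- Let k ≥ 1 and let E(k₊) be the commutative ℚ-algebra E(k₊) = ℚ[ω_{uv} : u ≠ v ∈ {0,1,…,k}] / I, where I is the ideal generated by ω_{vu} + ω_{uv} and ω_{uv}² for all u ≠ v, and by the Arnold relations ω_{uv}ω_{vw} + ω_{vw}ω_{wu} + ω_{wu}ω_{uv} for all pairwise distinct u, v, w. For distinct i, j ∈ {1,…,k} set f_{ij} := ω_{ij} + ω_{0i} − ω_{0j} ∈ E(k₊). Then for all pairwise distinct i, j, l ∈ {1,…,k}: (a) f_{ji} = −f_{ij}; (b) f_{ij}² = 0; (c) f_{ij}·f_{jl} + f_{jl}·f_{li} + f_{li}·f_{ij} = 0. -/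
/-- Index type for the generators `ω_{uv}`, `u ≠ v ∈ {0, 1, …, k}`. -/
abbrev ConfPairIdx (k : ℕ) : Type :=
  {p : Fin (k + 1) × Fin (k + 1) // p.1 ≠ p.2}

open MvPolynomial in
/-- The ideal `I` generated by `ω_{vu} + ω_{uv}`, `ω_{uv}²` and the Arnold relations
`ω_{uv}ω_{vw} + ω_{vw}ω_{wu} + ω_{wu}ω_{uv}`. -/
noncomputable def confRelIdeal (k : ℕ) : Ideal (MvPolynomial (ConfPairIdx k) ℚ) :=
  Ideal.span
    {x | (∃ (u v : Fin (k + 1)) (h : u ≠ v),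
            x = X ⟨(v, u), h.symm⟩ + X ⟨(u, v), h⟩) ∨
         (∃ (u v : Fin (k + 1)) (h : u ≠ v),
            x = X ⟨(u, v), h⟩ ^ 2) ∨
         (∃ (u v w : Fin (k + 1)) (huv : u ≠ v) (hvw : v ≠ w) (hwu : w ≠ u),
            x = X ⟨(u, v), huv⟩ * X ⟨(v, w), hvw⟩
              + X ⟨(v, w), hvw⟩ * X ⟨(w, u), hwu⟩
              + X ⟨(w, u), hwu⟩ * X ⟨(u, v), huv⟩)}

/-- The commutative `ℚ`-algebra `E(k₊) = ℚ[ω_{uv} : u ≠ v ∈ {0, …, k}] / I`. -/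
abbrev ConfAlg (k : ℕ) : Type :=
  MvPolynomial (ConfPairIdx k) ℚ ⧸ confRelIdeal k

/-- The class `ω_{uv} ∈ E(k₊)`. -/
noncomputable def confOmega (k : ℕ) (u v : Fin (k + 1)) (h : u ≠ v) : ConfAlg k :=
  Ideal.Quotient.mk (confRelIdeal k) (MvPolynomial.X ⟨(u, v), h⟩)

/-- The element `f_{ij} = ω_{ij} + ω_{0i} - ω_{0j} ∈ E(k₊)` for `i ≠ j ∈ {1, …, k}`. -/
noncomputable def confF (k : ℕ) (i j : Fin (k + 1))
    (hi : i ≠ 0) (hj : j ≠ 0) (hij : i ≠ j) : ConfAlg k :=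
  confOmega k i j hij + confOmega k 0 i (Ne.symm hi) - confOmega k 0 j (Ne.symm hj)

section ConfAux

open MvPolynomial

lemma confOmega_add (k : ℕ) (u v : Fin (k + 1)) (h : u ≠ v) :
    confOmega k v u h.symm + confOmega k u v h = 0 := by
  unfold confOmega
  rw [← map_add, Ideal.Quotient.eq_zero_iff_mem]
  exact Ideal.subset_span (Or.inl ⟨u, v, h, rfl⟩)

lemma confOmega_sq (k : ℕ) (u v : Fin (k + 1)) (h : u ≠ v) :
    confOmega k u v h ^ 2 = 0 := by
  unfold confOmega
  rw [← map_pow, Ideal.Quotient.eq_zero_iff_mem]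
  exact Ideal.subset_span (Or.inr (Or.inl ⟨u, v, h, rfl⟩))

lemma confOmega_arnold (k : ℕ) (u v w : Fin (k + 1))
    (huv : u ≠ v) (hvw : v ≠ w) (hwu : w ≠ u) :
    confOmega k u v huv * confOmega k v w hvw
      + confOmega k v w hvw * confOmega k w u hwu
      + confOmega k w u hwu * confOmega k u v huv = 0 := by
  unfold confOmega
  rw [← map_mul, ← map_mul, ← map_mul, ← map_add, ← map_add,
    Ideal.Quotient.eq_zero_iff_mem]
  exact Ideal.subset_span (Or.inr (Or.inr ⟨u, v, w, huv, hvw, hwu, rfl⟩))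

end ConfAux

/-- For `k ≥ 1` and pairwise distinct `i, j, l ∈ {1, …, k}`:
(a) `f_{ji} = -f_{ij}`; (b) `f_{ij}² = 0`;
(c) `f_{ij} f_{jl} + f_{jl} f_{li} + f_{li} f_{ij} = 0` in `E(k₊)`. -/
theorem confF_relations (k : ℕ) (hk : 1 ≤ k) (i j l : Fin (k + 1))
    (hi : i ≠ 0) (hj : j ≠ 0) (hl : l ≠ 0)
    (hij : i ≠ j) (hjl : j ≠ l) (hli : l ≠ i) :
    confF k j i hj hi hij.symm = -confF k i j hi hj hij ∧
    confF k i j hi hj hij ^ 2 = 0 ∧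
    confF k i j hi hj hij * confF k j l hj hl hjl
      + confF k j l hj hl hjl * confF k l i hl hi hli
      + confF k l i hl hi hli * confF k i j hi hj hij = 0 := by
  have Sij := confOmega_sq k i j hij
  have S0i := confOmega_sq k 0 i (Ne.symm hi)
  have S0j := confOmega_sq k 0 j (Ne.symm hj)
  have S0l := confOmega_sq k 0 l (Ne.symm hl)
  have Pji : confOmega k j i hij.symm + confOmega k i j hij = 0 :=
    confOmega_add k i j hij
  have Pj0 : confOmega k j 0 hj + confOmega k 0 j (Ne.symm hj) = 0 :=
    confOmega_add k 0 j (Ne.symm hj)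
  have Pl0 : confOmega k l 0 hl + confOmega k 0 l (Ne.symm hl) = 0 :=
    confOmega_add k 0 l (Ne.symm hl)
  have Pi0 : confOmega k i 0 hi + confOmega k 0 i (Ne.symm hi) = 0 :=
    confOmega_add k 0 i (Ne.symm hi)
  have A0 := confOmega_arnold k i j l hij hjl hli
  have A1 := confOmega_arnold k 0 i j (Ne.symm hi) hij hj
  have A2 := confOmega_arnold k 0 j l (Ne.symm hj) hjl hl
  have A3 := confOmega_arnold k 0 l i (Ne.symm hl) hli hi
  unfold confF
  refine ⟨by linear_combination Pji, ?_, ?_⟩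
  · linear_combination Sij + S0i + S0j + 2 * A1
      - 2 * (confOmega k i j hij + confOmega k 0 i (Ne.symm hi)) * Pj0
  · linear_combination A0 - A1 - A2 - A3 - S0i - S0j - S0l
      + (confOmega k i j hij + confOmega k 0 i (Ne.symm hi)) * Pj0
      + (confOmega k j l hjl + confOmega k 0 j (Ne.symm hj)) * Pl0
      + (confOmega k l i hli + confOmega k 0 l (Ne.symm hl)) * Pi0
end

section
/- Let M be a smooth, compact, connected manifold without boundary of dimension n ≥ 1 and let k ≥ 1. The projection p : Conf_k(M) → M, (x_1, …, x_k) ↦ x_1, is a locally trivial fibration: for every x₀ ∈ M there exist an open neighborhood U of x₀ in M and a homeomorphism φ : p^{-1}(U) → U × Conf_{k−1}(M ∖ {x₀}) such that the composite of φ with the projection onto U equals p restricted to p^{-1}(U). -/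
/-!
Near `x₀` one can push `x₀` to any nearby point `u` by a homeomorphism `h_u` of `M` that depends
continuously on `u`, together with its inverse. In a chart centred at `c` it is the finger move
`x ↦ x + β(x) • (v - c)` for a tent function `β` of radius `r` and `‖v - c‖ ≤ r / 2`: this is
the identity plus a `1/2`-Lipschitz map, so it is inverted by the contraction principle, and the
uniform estimate for fixed points of nearby contractions makes the inverse jointly continuous.
Since `β` is supported in a compact ball, `h_u` extends by the identity outside the chart.
Then `z ↦ (z₀, (h_{z₀}⁻¹ zᵢ)_{i ≥ 1})` trivializes `Conf_k(M)` over the neighbourhood.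
-/

open scoped Manifold

open Function Metric Set
open scoped NNReal

noncomputable section

abbrev Conf (ι M : Type*) : Type _ := {x : ι → M // Injective x}

structure PointPushing (M : Type*) [TopologicalSpace M] (x₀ : M) (U : Set M) where
  push : U → M ≃ M
  continuous_push : Continuous fun p : U × M => push p.1 p.2
  continuous_push_symm : Continuous fun p : U × M => (push p.1).symm p.2
  push_base (u : U) : push u x₀ = u

namespace PointPushing

variable {M : Type*} [TopologicalSpace M] {x₀ : M} {U : Set M}

def confTrivialization (P : PointPushing M x₀ U) (k : ℕ) :
    {z : Conf (Fin (k + 1)) M // z.1 0 ∈ U} ≃ₜ U × Conf (Fin k) {m : M // m ≠ x₀} where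
  toFun z :=
    let u : U := ⟨z.1.1 0, z.2⟩
    (u, ⟨fun i => ⟨(P.push u).symm (z.1.1 i.succ), fun h => by
        rw [Equiv.symm_apply_eq, P.push_base] at h
        exact Fin.succ_ne_zero i (z.1.2 h)⟩,
      fun i j h =>
        Fin.succ_injective _ <| z.1.2 <| (P.push u).symm.injective (congrArg Subtype.val h)⟩)
  invFun p :=
    ⟨⟨Fin.cons p.1 fun i => P.push p.1 (p.2.1 i), Fin.cons_injective_iff.2
      ⟨fun ⟨i, h⟩ => (p.2.1 i).2 <| (P.push p.1).injective <| h.trans (P.push_base p.1).symm,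
        (P.push p.1).injective.comp <| Subtype.val_injective.comp p.2.2⟩⟩, p.1.2⟩
  left_inv z := by
    ext i
    refine Fin.cases ?_ (fun i => ?_) i <;> simp
  right_inv p := by
    ext i <;> simp
  continuous_toFun := by
    have hz : Continuous fun z : {z : Conf (Fin (k + 1)) M // z.1 0 ∈ U} => z.1.1 :=
      continuous_subtype_val.comp continuous_subtype_val
    have hu :
        Continuous fun z : {z : Conf (Fin (k + 1)) M // z.1 0 ∈ U} => (⟨z.1.1 0, z.2⟩ : U) :=
      ((continuous_apply 0).comp hz).subtype_mk _
    refine hu.prodMk (Continuous.subtype_mk (continuous_pi fun i => ?_) _)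
    exact (P.continuous_push_symm.comp (hu.prodMk ((continuous_apply _).comp hz))).subtype_mk _
  continuous_invFun := by
    refine Continuous.subtype_mk (Continuous.subtype_mk ?_ _) _
    have hy : Continuous fun p : U × Conf (Fin k) {m : M // m ≠ x₀} => fun i => (p.2.1 i : M) :=
      continuous_pi fun i => continuous_subtype_val.comp <| (continuous_apply i).comp <|
        continuous_subtype_val.comp continuous_snd
    exact Continuous.finCons (A := fun _ => M) (continuous_subtype_val.comp continuous_fst) <|
      continuous_pi fun i =>
        P.continuous_push.comp <| continuous_fst.prodMk <| (continuous_apply i).comp hy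

theorem confTrivialization_fst (P : PointPushing M x₀ U) (k : ℕ) (z) :
    ((P.confTrivialization k z).1 : M) = z.1.1 0 := rfl

end PointPushing

section Tent

variable {X : Type*} [PseudoMetricSpace X] {c : X} {r : ℝ}

def tent (c : X) (r : ℝ) (x : X) : ℝ := max 0 (1 - dist x c / r)

theorem tent_nonneg (x : X) : 0 ≤ tent c r x := le_max_left _ _

theorem tent_le_one (hr : 0 ≤ r) (x : X) : tent c r x ≤ 1 :=
  max_le zero_le_one (sub_le_self _ (by positivity))

theorem tent_self : tent c r c = 1 := by simp [tent]

theorem tent_of_le (hr : 0 < r) {x : X} (hx : r ≤ dist x c) : tent c r x = 0 :=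
  max_eq_left <| sub_nonpos.2 <| (one_le_div hr).2 hx

theorem dist_tent_le (hr : 0 < r) (x y : X) : dist (tent c r x) (tent c r y) ≤ dist x y / r := by
  rw [Real.dist_eq, tent, tent, max_comm, max_comm 0]
  refine (abs_max_sub_max_le_abs _ _ _).trans ?_
  rw [sub_sub_sub_cancel_left, ← sub_div, abs_div, abs_of_pos hr]
  gcongr
  rw [abs_sub_comm]
  exact abs_dist_sub_le x y c

end Tent

section TentPush

variable {E : Type*} [NormedAddCommGroup E] [NormedSpace ℝ E] {c v : E} {r : ℝ}

def tentPush (c : E) (r : ℝ) (v x : E) : E := x + tent c r x • (v - c)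

theorem tentPush_of_le (hr : 0 < r) {x : E} (hx : r ≤ dist x c) : tentPush c r v x = x := by
  simp [tentPush, tent_of_le hr hx]

theorem continuous_tentPush : Continuous fun p : E × E => tentPush c r p.1 p.2 := by
  unfold tentPush tent; fun_prop

theorem contractingWith_sub_tent_smul (hr : 0 < r) (hv : dist v c ≤ r / 2) (y : E) :
    ContractingWith (1 / 2) fun x => y - tent c r x • (v - c) := by
  refine ⟨by norm_num, LipschitzWith.of_dist_le_mul fun x x' => ?_⟩
  rw [dist_sub_left, dist_eq_norm, ← sub_smul, norm_smul, ← dist_eq_norm, ← dist_eq_norm]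
  calc dist (tent c r x) (tent c r x') * dist v c ≤ dist x x' / r * (r / 2) := by
        gcongr
        exact dist_tent_le hr x x'
    _ = _ := by push_cast; field_simp

variable [CompleteSpace E]

def tentPushEquiv (hr : 0 < r) (hv : dist v c ≤ r / 2) : E ≃ E where
  toFun := tentPush c r v
  invFun y := ContractingWith.fixedPoint _ (contractingWith_sub_tent_smul hr hv y)
  left_inv x := .symm <| ContractingWith.fixedPoint_unique _ <| by
    simp [IsFixedPt, tentPush]
  right_inv y := by
    have h := (contractingWith_sub_tent_smul hr hv y).fixedPoint_isFixedPt
    exact (sub_eq_iff_eq_add.1 h).symm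

theorem lipschitzWith_tentPushEquiv_symm (hr : 0 < r) :
    LipschitzWith 4 fun p : closedBall c (r / 2) × E => (tentPushEquiv hr p.1.2).symm p.2 := by
  refine LipschitzWith.of_dist_le_mul fun p q => ?_
  have hf (p : closedBall c (r / 2) × E) := contractingWith_sub_tent_smul hr p.1.2 p.2
  have hclose (x : E) :
      dist (p.2 - tent c r x • (p.1 - c)) (q.2 - tent c r x • (q.1 - c)) ≤ 2 * dist p q := by
    have hsmul : dist (tent c r x • ((p.1 : E) - c)) (tent c r x • ((q.1 : E) - c)) ≤
        dist p.1 q.1 := by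
      rw [dist_smul₀, dist_sub_right, Real.norm_of_nonneg (tent_nonneg x), Subtype.dist_eq]
      exact mul_le_of_le_one_left dist_nonneg (tent_le_one hr.le x)
    calc _ ≤ dist p.2 q.2 + dist p.1 q.1 := (dist_sub_sub_le _ _ _ _).trans (add_le_add_right hsmul _)
      _ ≤ 2 * dist p q := by
        rw [Prod.dist_eq, two_mul]
        exact add_le_add (le_max_right _ _) (le_max_left _ _)
  calc _ ≤ 2 * dist p q / (1 - (1 / 2 : ℝ≥0)) :=
        (hf p).dist_fixedPoint_fixedPoint_of_dist_le' _ (hf p).fixedPoint_isFixedPt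
          (hf q).fixedPoint_isFixedPt hclose
    _ = 4 * dist p q := by norm_num; ring

def tentPointPushing (hr : 0 < r) : PointPushing E c (ball c (r / 2)) where
  push v := tentPushEquiv hr (mem_ball.1 v.2).le
  continuous_push := continuous_tentPush.comp (continuous_subtype_val.prodMap continuous_id)
  continuous_push_symm := (lipschitzWith_tentPushEquiv_symm hr).continuous.comp
    ((continuous_inclusion ball_subset_closedBall).prodMap continuous_id)
  push_base v := by simp [tentPushEquiv, tentPush, tent_self]

end TentPush

theorem Equiv.mapsTo_of_eqOn_compl {α : Type*} {σ : α ≃ α} {K s : Set α} (hσ : EqOn σ id Kᶜ)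
    (hKs : K ⊆ s) : MapsTo σ s s := by
  intro x hx
  by_cases hxK : x ∈ K
  · refine hKs (by_contra fun hσx => hσx ?_)
    rw [σ.injective (hσ hσx)]
    exact hxK
  · rw [hσ hxK]; exact hx

theorem Equiv.symm_eqOn_compl {α : Type*} {σ : α ≃ α} {K : Set α} (hσ : EqOn σ id Kᶜ) :
    EqOn σ.symm id Kᶜ :=
  fun _ hx => σ.symm_apply_eq.2 (hσ hx).symm

namespace OpenPartialHomeomorph

variable {M E : Type*} [TopologicalSpace M] [TopologicalSpace E] (e : OpenPartialHomeomorph M E)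

open scoped Classical in
def conjExtend (g : E → E) (m : M) : M := if m ∈ e.source then e.symm (g (e m)) else m

variable {e}

theorem conjExtend_of_mem {g : E → E} {m : M} (hm : m ∈ e.source) :
    e.conjExtend g m = e.symm (g (e m)) := if_pos hm

theorem conjExtend_of_notMem {g : E → E} {m : M} (hm : m ∉ e.source) :
    e.conjExtend g m = m := if_neg hm

theorem conjExtend_conjExtend {g h : E → E} (hh : MapsTo h e.target e.target) (m : M) :
    e.conjExtend g (e.conjExtend h m) = e.conjExtend (g ∘ h) m := by
  by_cases hm : m ∈ e.source
  · have hhm := hh (e.map_source hm)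
    rw [conjExtend_of_mem hm, conjExtend_of_mem (e.map_target hhm), conjExtend_of_mem hm,
      e.right_inv hhm, comp_apply]
  · rw [conjExtend_of_notMem hm, conjExtend_of_notMem hm, conjExtend_of_notMem hm]

theorem conjExtend_id : e.conjExtend id = id := by
  funext m
  by_cases hm : m ∈ e.source
  · rw [conjExtend_of_mem hm, id, e.left_inv hm, id]
  · exact conjExtend_of_notMem hm

def conjExtendEquiv (σ : E ≃ E) (hσ : MapsTo σ e.target e.target)
    (hσ' : MapsTo σ.symm e.target e.target) : M ≃ M where
  toFun := e.conjExtend σ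
  invFun := e.conjExtend σ.symm
  left_inv m := by
    rw [conjExtend_conjExtend hσ, σ.symm_comp_self, conjExtend_id, id]
  right_inv m := by
    rw [conjExtend_conjExtend hσ', σ.self_comp_symm, conjExtend_id, id]

theorem continuous_conjExtend [T2Space M] {T : Type*} [TopologicalSpace T] {g : T → E → E}
    {K : Set E} (hK : IsCompact K) (hKe : K ⊆ e.target) (hg : Continuous (uncurry g))
    (hge : ∀ t, MapsTo (g t) e.target e.target) (hgK : ∀ t, EqOn (g t) id Kᶜ) :
    Continuous fun p : T × M => e.conjExtend (g p.1) p.2 := by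
  set L := e.symm '' K
  have hLs : L ⊆ e.source := image_subset_iff.2 fun x hx => e.map_target (hKe hx)
  have hL : IsClosed L := (hK.image_of_continuousOn (e.continuousOn_symm.mono hKe)).isClosed
  have h_in : ContinuousOn (fun p : T × M => e.conjExtend (g p.1) p.2) (univ ×ˢ e.source) := by
    have hchart : ContinuousOn (fun p : T × M => (p.1, e p.2)) (univ ×ˢ e.source) :=
      continuousOn_fst.prodMk (e.continuousOn.comp continuousOn_snd fun p hp => hp.2)
    refine (e.continuousOn_symm.comp (hg.comp_continuousOn hchart) fun p hp =>
      hge p.1 (e.map_source hp.2)).congr fun p hp => conjExtend_of_mem hp.2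
  have h_out : ContinuousOn (fun p : T × M => e.conjExtend (g p.1) p.2) (univ ×ˢ Lᶜ) := by
    refine continuous_snd.continuousOn.congr fun p hp => ?_
    by_cases hm : p.2 ∈ e.source
    · have hK : e p.2 ∉ K := fun h => hp.2 ⟨e p.2, h, e.left_inv hm⟩
      rw [conjExtend_of_mem hm, hgK p.1 hK, id, e.left_inv hm]
    · exact conjExtend_of_notMem hm
  have hcover : univ ×ˢ e.source ∪ univ ×ˢ Lᶜ = (univ : Set (T × M)) :=
    eq_univ_of_forall fun p => (em (p.2 ∈ e.source)).imp (⟨trivial, ·⟩)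
      fun hm => ⟨trivial, fun hL => hm (hLs hL)⟩
  rw [← continuousOn_univ, ← hcover]
  exact h_in.union_of_isOpen h_out (isOpen_univ.prod e.open_source)
    (isOpen_univ.prod hL.isOpen_compl)

end OpenPartialHomeomorph

namespace PointPushing

variable {M E : Type*} [TopologicalSpace M] [T2Space M] [TopologicalSpace E]
  {e : OpenPartialHomeomorph M E} {x₀ : M} {V : Set E}

def transport (P : PointPushing E (e x₀) V) (hx₀ : x₀ ∈ e.source) {K : Set E} (hK : IsCompact K)
    (hKe : K ⊆ e.target) (hPK : ∀ v, EqOn (P.push v) id Kᶜ) :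
    PointPushing M x₀ (e.source ∩ e ⁻¹' V) :=
  have hchart : Continuous fun u : ↥(e.source ∩ e ⁻¹' V) => (⟨e u, u.2.2⟩ : V) :=
    (e.continuousOn.comp_continuous continuous_subtype_val fun u => u.2.1).subtype_mk _
  { push := fun u => e.conjExtendEquiv (P.push ⟨e u, u.2.2⟩)
      (Equiv.mapsTo_of_eqOn_compl (hPK _) hKe)
      (Equiv.mapsTo_of_eqOn_compl (Equiv.symm_eqOn_compl (hPK _)) hKe)
    continuous_push := (e.continuous_conjExtend hK hKe P.continuous_push
      (fun v => Equiv.mapsTo_of_eqOn_compl (hPK v) hKe) hPK).comp (hchart.prodMap continuous_id)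
    continuous_push_symm := (e.continuous_conjExtend hK hKe P.continuous_push_symm
      (fun v => Equiv.mapsTo_of_eqOn_compl (Equiv.symm_eqOn_compl (hPK v)) hKe)
      fun v => Equiv.symm_eqOn_compl (hPK v)).comp (hchart.prodMap continuous_id)
    push_base := fun u => by
      change e.conjExtend _ x₀ = u
      rw [OpenPartialHomeomorph.conjExtend_of_mem hx₀, P.push_base, e.left_inv u.2.1] }

end PointPushing

theorem OpenPartialHomeomorph.exists_pointPushing {M E : Type*} [TopologicalSpace M] [T2Space M]
    [NormedAddCommGroup E] [NormedSpace ℝ E] [ProperSpace E] (e : OpenPartialHomeomorph M E)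
    {x₀ : M} (hx₀ : x₀ ∈ e.source) :
    ∃ U : Set M, IsOpen U ∧ x₀ ∈ U ∧ Nonempty (PointPushing M x₀ U) := by
  obtain ⟨r, hr, hre⟩ :=
    nhds_basis_closedBall.mem_iff.1 (e.open_target.mem_nhds (e.map_source hx₀))
  refine ⟨_, e.isOpen_inter_preimage isOpen_ball, ⟨hx₀, mem_ball_self (half_pos hr)⟩,
    ⟨(tentPointPushing hr).transport hx₀ (isCompact_closedBall _ r) hre fun v x hx => ?_⟩⟩
  exact tentPush_of_le hr (not_le.1 (mt mem_closedBall.2 hx)).le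

end

theorem fadell_neuwirth_locally_trivial_general
    (n : ℕ)
    (M : Type*) [TopologicalSpace M] [T2Space M]
    [ChartedSpace (EuclideanSpace ℝ (Fin n)) M]
    (k : ℕ) (hk : 1 ≤ k) (x₀ : M) :
    ∃ U : Set M, IsOpen U ∧ x₀ ∈ U ∧
      ∃ φ : {z : {x : Fin k → M // Function.Injective x} // z.val ⟨0, hk⟩ ∈ U} ≃ₜ
          ↥U × {y : Fin (k - 1) → {m : M // m ≠ x₀} // Function.Injective y},
        ∀ z, ((φ z).1 : M) = z.val.val ⟨0, hk⟩ := by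
  obtain ⟨U, hU, hx₀U, ⟨P⟩⟩ :=
    (chartAt (EuclideanSpace ℝ (Fin n)) x₀).exists_pointPushing (mem_chart_source _ x₀)
  obtain ⟨k, rfl⟩ := Nat.exists_eq_add_of_le' hk
  exact ⟨U, hU, hx₀U, P.confTrivialization k, P.confTrivialization_fst k⟩

/-- **Fadell–Neuwirth fibration.**
Let `M` be a smooth compact connected boundaryless manifold of dimension `n ≥ 1` and
`k ≥ 1`.  The projection `p : Conf_k(M) → M`, `x ↦ x_1`, is a locally trivial
fibration: every `x₀ ∈ M` has an open neighborhood `U` with a homeomorphism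
`p⁻¹(U) ≃ U × Conf_{k-1}(M \ {x₀})` over `U`. -/
theorem fadell_neuwirth_locally_trivial
    (n : ℕ) (hn : 1 ≤ n)
    (M : Type*) [TopologicalSpace M] [T2Space M]
    [ChartedSpace (EuclideanSpace ℝ (Fin n)) M]
    [IsManifold (𝓡 n) (⊤ : ℕ∞) M]
    [CompactSpace M] [ConnectedSpace M]
    (k : ℕ) (hk : 1 ≤ k) (x₀ : M) :
    ∃ U : Set M, IsOpen U ∧ x₀ ∈ U ∧
      ∃ φ : {z : {x : Fin k → M // Function.Injective x} // z.val ⟨0, hk⟩ ∈ U} ≃ₜ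
          ↥U × {y : Fin (k - 1) → {m : M // m ≠ x₀} // Function.Injective y},
        ∀ z, ((φ z).1 : M) = z.val.val ⟨0, hk⟩ :=
  fadell_neuwirth_locally_trivial_general n M k hk x₀
end
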